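/- Let I, Γ ⊂ ℤ^d be finite frequency sets, let k ∈ I ∪ Γ be fixed, and let M be a prime number such that the reduction map h ↦ h mod M (componentwise) is injective on I ∪ Γ. If z is drawn uniformly at random from ([0, M−1] ∩ ℤ)^d, then the probability that there exists h ∈ I \ {k} with (h − k)·z ≡ 0 (mod M) is at most |I| / M. -/

import Mathlib

/-!
Each bad event `(h - k) · z ≡ 0 (mod M)` with `h ≠ k` is the vanishing of a linear form over
`ZMod M` which is nonzero because reduction mod `M` separates `h` from `k`. A nonzero linear form
on `𝔽_M^d` is onto, so its kernel has `M^(d-1)` points, i.e. the event has probability `1/M`;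
a union bound over the at most `|I|` choices of `h` gives `|I|/M`.
-/

open Finset

theorem card_filter_dotProduct_eq_zero_mul_card {F ι : Type*} [Field F] [Fintype F]
    [DecidableEq F] [Fintype ι] [DecidableEq ι] {c : ι → F} (hc : c ≠ 0) :
    #{z : ι → F | c ⬝ᵥ z = 0} * Fintype.card F = Fintype.card F ^ Fintype.card ι := by
  obtain ⟨i, hi⟩ := Function.ne_iff.mp hc
  let f : (ι → F) →+ F := AddMonoidHom.mk' (c ⬝ᵥ ·) (dotProduct_add c)
  have hf : Function.Surjective f := fun y =>
    ⟨Pi.single i (y / c i), by simp [f, dotProduct_single, mul_div_cancel₀ _ hi]⟩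
  have hker := f.ker.card_mul_index
  rw [AddSubgroup.index_ker, f.range_eq_top_of_surjective hf, AddSubgroup.card_top] at hker
  simpa [Nat.card_eq_fintype_card, Fintype.card_subtype, f] using hker

theorem card_filter_dvd_sum_mul_le {ι : Type*} [Fintype ι] [DecidableEq ι] {p : ℕ} [Fact p.Prime]
    {c : ι → ℤ} (hc : (fun i => (c i : ZMod p)) ≠ 0) :
    #{z : ι → Fin p | (p : ℤ) ∣ ∑ i, c i * ((z i : ℕ) : ℤ)} * p ≤ p ^ Fintype.card ι := by
  calc #{z : ι → Fin p | (p : ℤ) ∣ ∑ i, c i * ((z i : ℕ) : ℤ)} * p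
      ≤ #{w : ι → ZMod p | (fun i => (c i : ZMod p)) ⬝ᵥ w = 0} * p := by
        gcongr
        refine card_le_card_of_injOn (fun z i => ((z i : ℕ) : ZMod p)) ?_ ?_
        · intro z hz
          simp only [coe_filter, Set.mem_ofPred_eq] at hz ⊢
          rw [← ZMod.intCast_zmod_eq_zero_iff_dvd] at hz
          simpa [dotProduct] using hz
        · intro z _ w _ hzw
          funext i
          have := congrFun hzw i
          simp only at this
          rw [ZMod.natCast_eq_natCast_iff'] at this
          simpa [Nat.mod_eq_of_lt (z i).isLt, Nat.mod_eq_of_lt (w i).isLt, Fin.ext_iff] using this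
    _ = p ^ Fintype.card ι := by
        simpa using card_filter_dotProduct_eq_zero_mul_card hc

theorem intCast_sub_ne_zero_of_injOn_emod {ι : Type*} {M : ℕ} {s : Set (ι → ℤ)}
    (hinj : Set.InjOn (fun h : ι → ℤ => fun t => h t % (M : ℤ)) s) {h k : ι → ℤ}
    (hh : h ∈ s) (hk : k ∈ s) (hne : h ≠ k) :
    (fun t => ((h t - k t : ℤ) : ZMod M)) ≠ 0 := by
  intro hzero
  refine hne (hinj hh hk (funext fun t => ?_))
  have := congrFun hzero t
  rwa [Pi.zero_apply, Int.cast_sub, sub_eq_zero, ZMod.intCast_eq_intCast_iff'] at this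

theorem card_filter_exists_mul_le {α β : Type*} [Fintype α] {s : Finset β} {P : β → α → Prop}
    [∀ b, DecidablePred (P b)] {m n : ℕ} (h : ∀ b ∈ s, #{a | P b a} * m ≤ n) :
    #{a | ∃ b ∈ s, P b a} * m ≤ #s * n := by
  classical
  have hsub : ({a | ∃ b ∈ s, P b a} : Finset α) ⊆ s.biUnion fun b => {a | P b a} := by
    intro a ha
    simpa using ha
  calc #{a | ∃ b ∈ s, P b a} * m
      ≤ (∑ b ∈ s, #{a | P b a}) * m := by gcongr; exact (card_le_card hsub).trans card_biUnion_le
    _ = ∑ b ∈ s, #{a | P b a} * m := sum_mul ..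
    _ ≤ #s * n := by simpa using sum_le_sum h

open scoped Classical in
/-- Single-lattice aliasing probability bound: for finite `I, Γ ⊂ ℤ^d`, a fixed `k ∈ I ∪ Γ`,
and a prime `M` such that componentwise reduction mod `M` is injective on `I ∪ Γ`, a uniformly
random `z ∈ {0,…,M-1}^d` produces aliasing of `k` to some `h ∈ I \ {k}` with probability at
most `|I|/M`; stated as `(number of bad z) * M ≤ |I| * M^d`. -/
theorem prob_alias_le (d M : ℕ) (hM : Nat.Prime M) (I Γ : Finset (Fin d → ℤ))
    (k : Fin d → ℤ) (hk : k ∈ I ∪ Γ)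
    (hinj : Set.InjOn (fun h : Fin d → ℤ => fun t => h t % (M : ℤ)) ↑(I ∪ Γ)) :
    ((Finset.univ.filter fun z : Fin d → Fin M =>
        ∃ h ∈ I.erase k, (M : ℤ) ∣ ∑ t, (h t - k t) * ((z t : ℕ) : ℤ)).card : ℝ) * M
      ≤ (I.card : ℝ) * (M : ℝ) ^ d := by
  have : Fact M.Prime := ⟨hM⟩
  have hterm : ∀ h ∈ I.erase k,
      #{z : Fin d → Fin M | (M : ℤ) ∣ ∑ t, (h t - k t) * ((z t : ℕ) : ℤ)} * M ≤ M ^ d :=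
    fun h hh => by
      simpa using card_filter_dvd_sum_mul_le (intCast_sub_ne_zero_of_injOn_emod hinj
        (mem_union_left _ (mem_of_mem_erase hh)) hk (ne_of_mem_erase hh))
  exact_mod_cast (card_filter_exists_mul_le hterm).trans (Nat.mul_le_mul_right _ card_erase_le)
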